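/- Let M be an interval module with interval I_M ⊆ ℝ̄ⁿ. For any x ∈ I_M, the diagonal distance to the upper boundary satisfies dl(x, U(I_M)) = sup{δ ∈ ℝ̄ : x + δ⃗ ∈ I_M}, and symmetrically dl(x, L(I_M)) = sup{δ ∈ ℝ̄ : x − δ⃗ ∈ I_M}. -/

import Mathlib

open scoped ENNReal NNReal
open Filter
noncomputable section
attribute [local instance] Classical.propDecidable
set_option linter.unusedVariables false

/-- Points of the poset ℝⁿ. The product instance gives the pointwise partial order
and the sup-norm metric. -/
abbrev Pt (n : ℕ) := Fin n → ℝ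

/-- The diagonal vector δ⃗ = (δ,...,δ). -/
def diag (n : ℕ) (δ : ℝ) : Pt n := fun _ => δ

lemma le_add_diag {n : ℕ} (x : Pt n) {δ : ℝ} (hδ : 0 ≤ δ) : x ≤ x + diag n δ :=
  fun _ => le_add_of_nonneg_right hδ

/-- A (p.f.d.-agnostic) persistence module over the poset ℝⁿ with values in
k-vector spaces: a functor from ℝⁿ to Vec. -/
structure PersMod (n : ℕ) (k : Type*) [Field k] where
  V : Pt n → Type*
  [addgrp : ∀ x, AddCommGroup (V x)]
  [mod : ∀ x, Module k (V x)]
  ρ : ∀ {x y : Pt n}, x ≤ y → (V x →ₗ[k] V y)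
  ρ_id : ∀ x : Pt n, ρ (le_refl x) = LinearMap.id
  ρ_comp : ∀ {x y z : Pt n} (h1 : x ≤ y) (h2 : y ≤ z), ρ (h1.trans h2) = (ρ h2).comp (ρ h1)

attribute [instance] PersMod.addgrp PersMod.mod

variable {n : ℕ} {k : Type*} [Field k]

/-- A morphism (natural transformation) of persistence modules. -/
structure PersHom (M N : PersMod n k) where
  app : ∀ x, M.V x →ₗ[k] N.V x
  natural : ∀ {x y : Pt n} (h : x ≤ y), (app y).comp (M.ρ h) = (N.ρ h).comp (app x)

/-- A δ-interleaving between M and N: families φ_x : M_x → N_{x+δ⃗},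
ψ_x : N_x → M_{x+δ⃗} satisfying square and triangular commutativity. -/
def PersMod.Interleaved (M N : PersMod n k) (δ : ℝ≥0) : Prop :=
  ∃ (φ : ∀ x : Pt n, M.V x →ₗ[k] N.V (x + diag n (δ : ℝ)))
    (ψ : ∀ x : Pt n, N.V x →ₗ[k] M.V (x + diag n (δ : ℝ))),
    (∀ {x y : Pt n} (h : x ≤ y),
        (φ y).comp (M.ρ h) = (N.ρ (add_le_add_left h _)).comp (φ x)) ∧
    (∀ {x y : Pt n} (h : x ≤ y),
        (ψ y).comp (N.ρ h) = (M.ρ (add_le_add_left h _)).comp (ψ x)) ∧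
    (∀ x : Pt n, M.ρ ((le_add_diag x δ.coe_nonneg).trans (le_add_diag _ δ.coe_nonneg))
        = (ψ (x + diag n (δ : ℝ))).comp (φ x)) ∧
    (∀ x : Pt n, N.ρ ((le_add_diag x δ.coe_nonneg).trans (le_add_diag _ δ.coe_nonneg))
        = (φ (x + diag n (δ : ℝ))).comp (ψ x))

/-- The interleaving distance (∞ if no interleaving exists). -/
def PersMod.dI (M N : PersMod n k) : ℝ≥0∞ :=
  ⨅ (δ : ℝ≥0) (_ : M.Interleaved N δ), (δ : ℝ≥0∞)

/-- The diagonal shift M_{→d}. -/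
def PersMod.dshift (M : PersMod n k) (d : ℝ) : PersMod n k where
  V x := M.V (x + diag n d)
  ρ h := M.ρ (add_le_add_left h _)
  ρ_id x := M.ρ_id _
  ρ_comp h1 h2 := M.ρ_comp _ _

/-- M is c-trivial: every structure map over a diagonal shift by c is zero. -/
def PersMod.DTrivial (M : PersMod n k) (c : ℝ≥0) : Prop :=
  ∀ x : Pt n, M.ρ (le_add_diag x c.coe_nonneg) = 0

/-- The 1-parameter slice of M along the diagonal line through x. -/
def PersMod.slice (M : PersMod n k) (x : Pt n) : PersMod 1 k where
  V t := M.V (x + diag n (t 0))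
  ρ {t t'} h := M.ρ (fun i => add_le_add_right (h 0) (x i))
  ρ_id t := M.ρ_id _
  ρ_comp h1 h2 := M.ρ_comp _ _

/-- δ* = sup over diagonal lines of the slice interleaving distances. -/
def deltaStar (M N : PersMod n k) : ℝ≥0∞ :=
  ⨆ x : Pt n, (M.slice x).dI (N.slice x)

/-- Finite direct sum of persistence modules. -/
def dirSum {ι : Type} [Fintype ι] (Ms : ι → PersMod n k) : PersMod n k where
  V x := ∀ i, (Ms i).V x
  ρ h := LinearMap.pi (fun i => ((Ms i).ρ h).comp (LinearMap.proj i))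
  ρ_id x := by
    apply LinearMap.ext; intro v; funext i
    simp [(Ms i).ρ_id]
  ρ_comp h1 h2 := by
    apply LinearMap.ext; intro v; funext i
    show ((Ms i).ρ (h1.trans h2)) (v i) = _
    rw [(Ms i).ρ_comp h1 h2]; rfl

/-- Zigzag reachability inside a set: p ≤ p₁ ≥ p₂ ≤ ... with all points in A. -/
def Zigzag (A : Set (Pt n)) : Pt n → Pt n → Prop :=
  Relation.ReflTransGen (fun a b => a ∈ A ∧ b ∈ A ∧ (a ≤ b ∨ b ≤ a))

/-- An interval: nonempty, order-convex, zigzag-connected. -/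
def IsPInterval (I : Set (Pt n)) : Prop :=
  I.Nonempty ∧ (∀ p ∈ I, ∀ q ∈ I, ∀ r, p ≤ r → r ≤ q → r ∈ I) ∧
    ∀ p ∈ I, ∀ q ∈ I, Zigzag I p q

/-- Q is a (zigzag-)connected component of A. -/
def IsComponent (A Q : Set (Pt n)) : Prop :=
  ∃ p ∈ A, Q = {q | Zigzag A p q}

/-- The fibre of the interval module with interval I: k on I, 0 elsewhere,
realised as a submodule of k. -/
def subOf (k : Type*) [Field k] (I : Set (Pt n)) (x : Pt n) : Submodule k k :=
  if x ∈ I then ⊤ else ⊥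

/-- The canonical map between fibres: identity within I, zero otherwise. -/
def stepFun (I : Set (Pt n)) (x y : Pt n) :
    ↥(subOf k I x) →ₗ[k] ↥(subOf k I y) where
  toFun v := ⟨if y ∈ I then (v : k) else 0, by
    by_cases hy : y ∈ I
    · rw [if_pos hy]; simp only [subOf, if_pos hy]; exact Submodule.mem_top
    · rw [if_neg hy]; exact Submodule.zero_mem _⟩
  map_add' a b := by
    apply Subtype.ext
    show (if y ∈ I then ((a + b : ↥(subOf k I x)) : k) else 0) =
      (if y ∈ I then (a : k) else 0) + (if y ∈ I then (b : k) else 0)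
    by_cases hy : y ∈ I
    · rw [if_pos hy, if_pos hy, if_pos hy]; rfl
    · rw [if_neg hy, if_neg hy, if_neg hy, add_zero]
  map_smul' c a := by
    apply Subtype.ext
    show (if y ∈ I then ((c • a : ↥(subOf k I x)) : k) else 0) =
      c • (if y ∈ I then (a : k) else 0)
    by_cases hy : y ∈ I
    · rw [if_pos hy, if_pos hy]; rfl
    · rw [if_neg hy, if_neg hy, smul_zero]

/-- The interval module with interval I. -/
def IntervalMod (k : Type*) [Field k] (I : Set (Pt n)) (hI : IsPInterval I) :
    PersMod n k where
  V x := ↥(subOf k I x)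
  ρ {x y} _ := stepFun I x y
  ρ_id x := by
    apply LinearMap.ext; intro v
    apply Subtype.ext
    show (if x ∈ I then (v : k) else 0) = (v : k)
    by_cases hx : x ∈ I
    · rw [if_pos hx]
    · have hv : (v : k) = 0 := by
        have h := v.2; simp only [subOf, if_neg hx] at h; exact (Submodule.mem_bot k).1 h
      rw [if_neg hx, hv]
  ρ_comp {x y z} h1 h2 := by
    apply LinearMap.ext; intro v
    apply Subtype.ext
    show (if z ∈ I then (v : k) else 0) = (if z ∈ I then (if y ∈ I then (v : k) else 0) else 0)
    by_cases hz : z ∈ I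
    · by_cases hy : y ∈ I
      · rw [if_pos hz, if_pos hz, if_pos hy]
      · have hx : x ∉ I := fun hx => hy (hI.2.1 x hx z hz y h1 h2)
        have hv : (v : k) = 0 := by
          have h := v.2; simp only [subOf, if_neg hx] at h; exact (Submodule.mem_bot k).1 h
        rw [if_pos hz, if_pos hz, if_neg hy, hv]
    · rw [if_neg hz, if_neg hz]

/-- Lower boundary L(I). -/
def lowerBd (I : Set (Pt n)) : Set (Pt n) :=
  {x | x ∈ closure I ∧ ∀ y : Pt n, (∀ i, y i < x i) → y ∉ I}

/-- Upper boundary U(I). -/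
def upperBd (I : Set (Pt n)) : Set (Pt n) :=
  {x | x ∈ closure I ∧ ∀ y : Pt n, (∀ i, x i < y i) → y ∉ I}

/-- Diagonal distance dl(x, A): the infimum of sup-norm distances from x to
points of A along the diagonal line Δ_x, ∞ when Δ_x ∩ A = ∅. -/
def dl (x : Pt n) (A : Set (Pt n)) : ℝ≥0∞ :=
  ⨅ (α : ℝ) (_ : x + diag n α ∈ A), ENNReal.ofReal |α|

/-- d_triv^{(M,N)}(x) = max(dl(x,U(I_M))/2, dl(x,L(I_N))/2). -/
def dtriv (IM IN : Set (Pt n)) (x : Pt n) : ℝ≥0∞ :=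
  max (dl x (upperBd IM) / 2) (dl x (lowerBd IN) / 2)

/-- An intersection component with interval Q is δ_{(M,N)}-trivializable. -/
def Trivializable (IM IN Q : Set (Pt n)) (δ : ℝ≥0∞) : Prop :=
  ∀ x ∈ Q, dtriv IM IN x < δ

/-- (M,N)-validity of an intersection component with interval Q. -/
def MNValid (IM IN Q : Set (Pt n)) : Prop :=
  ∀ x ∈ Q, (∀ y : Pt n, y ≤ x → y ∈ IM → y ∈ IN) ∧
    (∀ z : Pt n, x ≤ z → z ∈ IN → z ∈ IM)

/-- The interval of the shifted module N_{→d}. -/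
def shiftSet (I : Set (Pt n)) (d : ℝ) : Set (Pt n) := {x | x + diag n d ∈ I}

/-- A vertex of (the boundary of) a set: a boundary point through which no
nontrivial line segment of the boundary passes. -/
def IsVertex (I : Set (Pt n)) (x : Pt n) : Prop :=
  x ∈ frontier I ∧
    ¬ ∃ v : Pt n, v ≠ 0 ∧ ∃ ε > (0:ℝ), ∀ t : ℝ, |t| < ε → x + t • v ∈ frontier I

/-- An axis-aligned (possibly degenerate) rectangle. -/
def IsRect (R : Set (Pt n)) : Prop := ∃ a b : Pt n, a ≤ b ∧ R = Set.Icc a b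

/-- A discretely presented interval: a finite union of rectangles. -/
def DiscPresented (I : Set (Pt n)) : Prop :=
  ∃ F : Finset (Set (Pt n)), (∀ R ∈ F, IsRect R) ∧ I = ⋃ R ∈ F, (R : Set (Pt n))

/-- f is a facet of I orthogonal to direction i: contained in a hyperplane
{y_i = c}, contained in the lower or upper boundary, and (n−1)-dimensional
(contains a full hyperplane patch around one of its points). -/
def IsFacetDir (I : Set (Pt n)) (f : Set (Pt n)) (i : Fin n) : Prop :=
  ∃ c : ℝ, f ⊆ {y | y i = c} ∧ (f ⊆ lowerBd I ∨ f ⊆ upperBd I) ∧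
    ∃ z ∈ f, ∃ ε > (0:ℝ), ∀ y : Pt n, y i = c → dist y z < ε → y ∈ f

/-- The set D(x) of the four diagonal boundary distances. -/
def candD (IM IN : Set (Pt n)) (x : Pt n) : Set ℝ≥0∞ :=
  {dl x (lowerBd IM), dl x (lowerBd IN), dl x (upperBd IM), dl x (upperBd IN)}

/-- The candidate set S. -/
def candS (IM IN : Set (Pt n)) : Set ℝ≥0∞ :=
  {d | ∃ x : Pt n, (IsVertex IM x ∨ IsVertex IN x) ∧
    (d ∈ candD IM IN x ∨ 2 * d ∈ candD IM IN x)}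

/-- One-sided limit lim_{ε→0+} f(x − ε v) (junk value if the limit fails to exist). -/
def dlim (f : Pt n → ℤ) (x v : Pt n) : ℤ :=
  limUnder (nhdsWithin (0:ℝ) (Set.Ioi 0)) (fun ε : ℝ => f (x - ε • v))

/-- The indicator vector Σ_{i ∈ s} e_i. -/
def basisVec (n : ℕ) (s : Finset (Fin n)) : Pt n := fun i => if i ∈ s then 1 else 0

/-- The differential Δf(x) = Σ_k (−1)^k Σ_{|s|=k} lim_{ε→0+} f(x − ε Σ_{i∈s} e_i). -/
def diffl (f : Pt n → ℤ) (x : Pt n) : ℤ :=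
  ∑ s : Finset (Fin n), (-1 : ℤ) ^ s.card * dlim f x (basisVec n s)

/-- Right continuity of f : ℝⁿ → ℤ. -/
def RightCont (f : Pt n → ℤ) : Prop :=
  ∀ x : Pt n, Filter.Tendsto f (nhdsWithin x (Set.Ici x)) (nhds (f x))

/-- A nice function: right continuous, finitely supported differential,
support bounded below. -/
def NiceFn (f : Pt n → ℤ) : Prop :=
  RightCont f ∧ {x | diffl f x ≠ 0}.Finite ∧ ∃ a : ℝ, ∀ x, f x ≠ 0 → ∀ i, a ≤ x i

/-- Positive part Δf₊. -/
def difflp (f : Pt n → ℤ) (x : Pt n) : ℤ := max (diffl f x) 0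
/-- Negative part Δf₋. -/
def difflm (f : Pt n → ℤ) (x : Pt n) : ℤ := min (diffl f x) 0

/-- Σ_{y ≤ x} g(y), as a finite sum over the support. -/
def sumLe (g : Pt n → ℤ) (x : Pt n) : ℤ := ∑ᶠ y ∈ {y : Pt n | y ≤ x}, g y

/-- The δ-extension f^{+δ}(x) = f_{Σ+}(x+δ⃗) + f_{Σ−}(x−δ⃗). -/
def extend (f : Pt n → ℤ) (δ : ℝ) (x : Pt n) : ℤ :=
  sumLe (difflp f) (x + diag n δ) + sumLe (difflm f) (x - diag n δ)

/-- The δ-shrinking f^{−δ}(x) = f_{Σ−}(x+δ⃗) + f_{Σ+}(x−δ⃗). -/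
def shrink (f : Pt n → ℤ) (δ : ℝ) (x : Pt n) : ℤ :=
  sumLe (difflm f) (x + diag n δ) + sumLe (difflp f) (x - diag n δ)

/-- d₊(f,g) = inf{δ : f ≤ g^{+δ}, g ≤ f^{+δ}}. -/
def dplus (f g : Pt n → ℤ) : ℝ≥0∞ :=
  ⨅ (δ : ℝ≥0) (_ : (∀ x, f x ≤ extend g δ x) ∧ (∀ x, g x ≤ extend f δ x)), (δ : ℝ≥0∞)

/-- d₋(f,g) = inf{δ : f ≥ g^{−δ}, g ≥ f^{−δ}}. -/
def dminus (f g : Pt n → ℤ) : ℝ≥0∞ :=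
  ⨅ (δ : ℝ≥0) (_ : (∀ x, shrink g δ x ≤ f x) ∧ (∀ x, shrink f δ x ≤ g x)), (δ : ℝ≥0∞)

/-- The dimension distance d₀ = min(d₋, d₊). -/
def d0 (f g : Pt n → ℤ) : ℝ≥0∞ := min (dminus f g) (dplus f g)

/-- The dimension function dm M(x) = dim M_x (as an integer). -/
def dmFun (M : PersMod n k) : Pt n → ℤ := fun x => (Module.finrank k (M.V x) : ℤ)

/-- A nice persistence module: all structure maps over sufficiently small
diagonal shifts are injective or surjective. -/
def PersMod.Nice (M : PersMod n k) : Prop :=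
  ∃ ε₀ > (0:ℝ), ∀ ε : ℝ, ∀ h0 : 0 < ε, ε < ε₀ → ∀ x : Pt n,
    Function.Injective (M.ρ (le_add_diag x h0.le)) ∨
      Function.Surjective (M.ρ (le_add_diag x h0.le))

/-- Composition ρ_i ∘ ... ∘ ρ₁ of a chain of linear maps. -/
def chainComp {K : Type*} [Field K] (V : ℕ → Type*) [∀ i, AddCommGroup (V i)]
    [∀ i, Module K (V i)] (ρ : ∀ i, V i →ₗ[K] V (i+1)) : ∀ i, V 0 →ₗ[K] V i
  | 0 => LinearMap.id
  | (i+1) => (ρ i).comp (chainComp V ρ i)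

/-! Every point `x + α⃗` of `U(I)` bounds the admissible shifts `{δ | x + δ⃗ ∈ I}` from above,
since a larger shift would put a point of `I` strictly above a point of `U(I)`. Conversely, if the
shifts are bounded, their supremum `s` puts `x + s⃗` in the closure of `I`, and a point of `I`
strictly above `x + s⃗` would, by order-convexity, allow a shift larger than `s`; so
`x + s⃗ ∈ U(I)`. The lower boundary is the case of `-I`, whose upper boundary is `-L(I)`. -/

open Topology

lemma IsPInterval.ordConnected {n : ℕ} {I : Set (Pt n)} (hI : IsPInterval I) :
    I.OrdConnected :=
  ⟨fun _ hp _ hq _ hr => hI.2.1 _ hp _ hq _ hr.1 hr.2⟩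

lemma Set.OrdConnected.neg {α : Type*} [AddCommGroup α] [PartialOrder α] [IsOrderedAddMonoid α]
    {I : Set α} (hI : I.OrdConnected) :
    (-I).OrdConnected :=
  ⟨fun _ hp _ hq _ hr => hI.out hq hp ⟨neg_le_neg hr.2, neg_le_neg hr.1⟩⟩

lemma add_diag_zero {n : ℕ} (x : Pt n) : x + diag n 0 = x := by
  funext i; simp [diag]

lemma diag_neg (n : ℕ) (α : ℝ) : diag n (-α) = -diag n α := rfl

lemma neg_add_diag {n : ℕ} (x : Pt n) (α : ℝ) : -(x + diag n α) = -x - diag n α := by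
  funext i; simp only [diag, Pi.neg_apply, Pi.add_apply, Pi.sub_apply]; ring

lemma upperBd_neg {n : ℕ} (I : Set (Pt n)) : upperBd (-I) = -lowerBd I := by
  ext p
  simp only [upperBd, lowerBd, Set.mem_neg, Set.mem_ofPred_eq, ← neg_closure, Pi.neg_apply]
  refine and_congr_right fun _ => ⟨fun h y hy => ?_, fun h y hy => ?_⟩
  · simpa using h (-y) fun i => by simpa using neg_lt_neg (hy i)
  · exact h (-y) fun i => by simpa using neg_lt_neg (hy i)

lemma dl_neg {n : ℕ} (x : Pt n) (A : Set (Pt n)) : dl (-x) (-A) = dl x A := by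
  unfold dl
  refine (Equiv.neg ℝ).iInf_congr fun α => ?_
  rw [Equiv.neg_apply, abs_neg, Set.mem_neg, diag_neg, neg_add, neg_neg]

lemma dl_le_of_add_diag_mem {n : ℕ} {x : Pt n} {A : Set (Pt n)} {α : ℝ}
    (h : x + diag n α ∈ A) : dl x A ≤ ENNReal.ofReal |α| :=
  iInf₂_le α h

lemma le_of_add_diag_mem_upperBd {n : ℕ} {I : Set (Pt n)} {x : Pt n} {δ α : ℝ}
    (hδ : x + diag n δ ∈ I) (hα : x + diag n α ∈ upperBd I) : δ ≤ α := by
  by_contra! h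
  exact hα.2 _ (fun i => by simpa [diag] using h) hδ

lemma sSup_ofReal_image_eq_top {S : Set ℝ} (hS : ¬ BddAbove S) :
    sSup (ENNReal.ofReal '' S) = ⊤ := by
  refine ENNReal.eq_top_of_forall_nnreal_le fun r => ?_
  obtain ⟨δ, hδ, hrδ⟩ := not_bddAbove_iff.mp hS r
  calc (r : ℝ≥0∞) = ENNReal.ofReal r := (ENNReal.ofReal_coe_nnreal).symm
    _ ≤ ENNReal.ofReal δ := ENNReal.ofReal_le_ofReal hrδ.le
    _ ≤ sSup (ENNReal.ofReal '' S) := le_sSup ⟨δ, hδ, rfl⟩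

lemma add_diag_csSup_mem_upperBd {n : ℕ} {I : Set (Pt n)} (hI : I.OrdConnected) {x : Pt n}
    (hx : x ∈ I) (hbdd : BddAbove {δ : ℝ | x + diag n δ ∈ I}) :
    x + diag n (sSup {δ : ℝ | x + diag n δ ∈ I}) ∈ upperBd I := by
  set S := {δ : ℝ | x + diag n δ ∈ I}
  have h0 : (0 : ℝ) ∈ S := by simpa [S, add_diag_zero] using hx
  have hcont : Continuous fun δ : ℝ => x + diag n δ :=
    continuous_const.add (continuous_pi fun _ => continuous_id)
  refine ⟨map_mem_closure (f := fun δ : ℝ => x + diag n δ) hcont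
    (csSup_mem_closure ⟨0, h0⟩ hbdd) fun _ h => h, fun y hy hyI => ?_⟩
  -- Strict inequality in each of the finitely many coordinates survives a small increase of δ.
  have hnear : ∀ᶠ δ in 𝓝 (sSup S), ∀ i, x i + δ < y i :=
    Filter.eventually_all.mpr fun i =>
      (continuous_const.add continuous_id).continuousAt.eventually_lt continuousAt_const (hy i)
  obtain ⟨δ, hδy, hsδ⟩ := (hnear.filter_mono nhdsWithin_le_nhds).and self_mem_nhdsWithin
    |>.exists (f := 𝓝[>] sSup S)
  have hδS : δ ∈ S :=
    hI.out hx hyI ⟨le_add_diag x ((le_csSup hbdd h0).trans hsδ.le), fun i => (hδy i).le⟩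
  exact (le_csSup hbdd hδS).not_gt hsδ

theorem dl_upperBd_eq_sSup {n : ℕ} {I : Set (Pt n)} (hI : I.OrdConnected) {x : Pt n}
    (hx : x ∈ I) :
    dl x (upperBd I) = sSup (ENNReal.ofReal '' {δ : ℝ | x + diag n δ ∈ I}) := by
  set S := {δ : ℝ | x + diag n δ ∈ I}
  refine le_antisymm ?_ (le_iInf₂ fun α hα => sSup_le ?_)
  · by_cases hbdd : BddAbove S
    · have h0 : (0 : ℝ) ∈ S := by simpa [S, add_diag_zero] using hx
      calc dl x (upperBd I) ≤ ENNReal.ofReal |sSup S| :=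
            dl_le_of_add_diag_mem (add_diag_csSup_mem_upperBd hI hx hbdd)
        _ = ENNReal.ofReal (sSup S) := by rw [abs_of_nonneg (le_csSup hbdd h0)]
        _ = sSup (ENNReal.ofReal '' S) :=
            ENNReal.ofReal_mono.map_csSup_of_continuousAt
              ENNReal.continuous_ofReal.continuousAt ⟨0, h0⟩ hbdd
    · rw [sSup_ofReal_image_eq_top hbdd]
      exact le_top
  · rintro _ ⟨δ, hδ, rfl⟩
    exact ENNReal.ofReal_le_ofReal ((le_of_add_diag_mem_upperBd hδ hα).trans (le_abs_self α))

theorem dl_lowerBd_eq_sSup {n : ℕ} {I : Set (Pt n)} (hI : I.OrdConnected) {x : Pt n}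
    (hx : x ∈ I) :
    dl x (lowerBd I) = sSup (ENNReal.ofReal '' {δ : ℝ | x - diag n δ ∈ I}) := by
  have hx' : -x ∈ -I := by simpa using hx
  rw [← dl_neg, ← upperBd_neg, dl_upperBd_eq_sSup hI.neg hx']
  simp only [Set.mem_neg, neg_add_diag, neg_neg]

/-- for x in an interval I, the diagonal distance to the upper
boundary is sup{δ : x + δ⃗ ∈ I}, and to the lower boundary is
sup{δ : x − δ⃗ ∈ I}. -/
theorem stmt4 {n : ℕ} (I : Set (Pt n)) (hI : IsPInterval I) (x : Pt n)
    (hx : x ∈ I) :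
    dl x (upperBd I) = sSup ((fun δ : ℝ => ENNReal.ofReal δ) ''
        {δ : ℝ | x + diag n δ ∈ I}) ∧
    dl x (lowerBd I) = sSup ((fun δ : ℝ => ENNReal.ofReal δ) ''
        {δ : ℝ | x - diag n δ ∈ I}) :=
  ⟨dl_upperBd_eq_sSup hI.ordConnected hx, dl_lowerBd_eq_sSup hI.ordConnected hx⟩
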